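/- If M is an inductively coherent approximation scheme, then the pointwise limit P(φ) := limₙ Mₙ(φ) exists for every sentence φ, takes values in [0,1], and is coherent: P(φ) = 1 for every provable φ, and P(φ ∨ ψ) = P(φ) + P(ψ) whenever ¬(φ ∧ ψ) is provable. -/

import Mathlib

/-!
Along a constant sequence `φ, φ, …` every step `φ → φ` is provable, so the convergence axiom
makes `Mₙ(φ)` converge. Applied to constant sequences, the
partition axiom says that `P` sums to `1` on every provable partition of truth, and `P(⊥) = 0`.
The partition `{φ, ⊥, ⊥}` for provable `φ` gives `P(φ) = 1`; when `¬(φ ∧ ψ)` is provable,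
comparing the partitions `{φ, ψ, ¬φ ∧ ¬ψ}` and `{φ ∨ ψ, ¬φ ∧ ¬ψ, ⊥}` gives additivity.
-/

open Filter Topology

/-- An abstract language of sentences with the usual connectives and a
provability predicate. -/
structure LogicCtx (S : Type) where
  neg : S → S
  disj : S → S → S
  conj : S → S → S
  imp : S → S → S
  bot : S
  Provable : S → Prop

namespace LogicCtx

variable {S : Type} (L : LogicCtx S)

/-- Conjunction of a list of sentences. -/
def bigConj : List S → S
  | [] => L.neg L.bot
  | φ :: rest => L.conj φ (bigConj rest)

/-- Disjunction of a list of sentences. -/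
def bigDisj : List S → S
  | [] => L.bot
  | φ :: rest => L.disj φ (bigDisj rest)

/-- The sentence expressing that exactly one member of `l` is true. -/
def exactlyOne (l : List S) : S :=
  L.bigDisj ((List.range l.length).map fun i =>
    L.bigConj (l.mapIdx fun j φ => if i = j then φ else L.neg φ))

/-- `{φ, ψ, χ}` is a provable partition of truth: it is provable that exactly
one of them holds. -/
def PartitionOfTruth (φ ψ χ : S) : Prop :=
  L.Provable (L.exactlyOne [φ, ψ, χ])

/-- Finite disjunctions `f 0 ∨ ⋯ ∨ f n` of a sequence. -/
def finDisj (f : ℕ → S) : ℕ → S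
  | 0 => f 0
  | n + 1 => L.disj (finDisj f n) (f (n + 1))

/-- A boolean valuation respecting the connectives. -/
def IsValuation (v : S → Bool) : Prop :=
  v L.bot = false ∧ (∀ φ, v (L.neg φ) = !v φ) ∧
  (∀ φ ψ, v (L.disj φ ψ) = (v φ || v ψ)) ∧
  (∀ φ ψ, v (L.conj φ ψ) = (v φ && v ψ)) ∧
  (∀ φ ψ, v (L.imp φ ψ) = (!v φ || v ψ))

/-- `Provable` respects propositional reasoning: every propositional
consequence of provable sentences is provable. -/
def RespectsPropLogic : Prop :=
  ∀ φ, (∀ v, L.IsValuation v → (∀ χ, L.Provable χ → v χ = true) → v φ = true) →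
    L.Provable φ

/-- The family of quickly computable sequences: contains all constant
sequences and is closed under pointwise negation, disjunction, conjunction,
finite disjunctions, and shift. -/
def QCClosed (QC : (ℕ → S) → Prop) : Prop :=
  (∀ φ, QC fun _ => φ) ∧
  (∀ f, QC f → QC fun n => L.neg (f n)) ∧
  (∀ f g, QC f → QC g → QC fun n => L.disj (f n) (g n)) ∧
  (∀ f g, QC f → QC g → QC fun n => L.conj (f n) (g n)) ∧
  (∀ f, QC f → QC (L.finDisj f)) ∧
  (∀ f, QC f → QC fun n => f (n + 1))

/-- Inductive coherence of an approximation scheme `M : ℕ → S → ℝ` with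
values in `[0,1]`:
1. `Mₙ(⊥) → 0`;
2. `Mₙ(φₙ)` converges whenever `{φₙ}` is quickly computable and each
   `φₙ → φₙ₊₁` is provable;
3. `Mₙ(φₙ) + Mₙ(ψₙ) + Mₙ(χₙ) → 1` whenever the three sequences are quickly
   computable and each `{φₙ, ψₙ, χₙ}` is a provable partition of truth. -/
def InductivelyCoherent (QC : (ℕ → S) → Prop) (M : ℕ → S → ℝ) : Prop :=
  (∀ n φ, M n φ ∈ Set.Icc (0 : ℝ) 1) ∧
  Tendsto (fun n => M n L.bot) atTop (𝓝 0) ∧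
  (∀ f, QC f → (∀ n, L.Provable (L.imp (f n) (f (n + 1)))) →
    ∃ l, Tendsto (fun n => M n (f n)) atTop (𝓝 l)) ∧
  (∀ f g h, QC f → QC g → QC h → (∀ n, L.PartitionOfTruth (f n) (g n) (h n)) →
    Tendsto (fun n => M n (f n) + M n (g n) + M n (h n)) atTop (𝓝 1))

end LogicCtx

namespace LogicCtx

variable {S : Type} {L : LogicCtx S}

section Valuation

variable {v : S → Bool}

theorem IsValuation.bot (hv : L.IsValuation v) : v L.bot = false := hv.1

theorem IsValuation.neg (hv : L.IsValuation v) (φ : S) : v (L.neg φ) = !v φ := hv.2.1 φ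

theorem IsValuation.disj (hv : L.IsValuation v) (φ ψ : S) :
    v (L.disj φ ψ) = (v φ || v ψ) := hv.2.2.1 φ ψ

theorem IsValuation.conj (hv : L.IsValuation v) (φ ψ : S) :
    v (L.conj φ ψ) = (v φ && v ψ) := hv.2.2.2.1 φ ψ

theorem IsValuation.imp (hv : L.IsValuation v) (φ ψ : S) :
    v (L.imp φ ψ) = (!v φ || v ψ) := hv.2.2.2.2 φ ψ

theorem IsValuation.exactlyOne_three (hv : L.IsValuation v) (φ ψ χ : S) :
    v (L.exactlyOne [φ, ψ, χ]) =
      ((v φ && !v ψ && !v χ) || (!v φ && v ψ && !v χ) || (!v φ && !v ψ && v χ)) := by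
  cases hφ : v φ <;> cases hψ : v ψ <;> cases hχ : v χ <;>
    simp [exactlyOne, bigDisj, bigConj, List.range_succ, hv.disj, hv.conj, hv.neg, hv.bot, hφ, hψ, hχ]

end Valuation

theorem RespectsPropLogic.provable_imp_self (hPL : L.RespectsPropLogic) (φ : S) :
    L.Provable (L.imp φ φ) :=
  hPL _ fun v hv _ => by rw [hv.imp]; cases v φ <;> rfl

theorem RespectsPropLogic.partitionOfTruth_bot_bot (hPL : L.RespectsPropLogic)
    {φ : S} (hφ : L.Provable φ) :
    L.PartitionOfTruth φ L.bot L.bot :=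
  hPL _ fun v hv hprov => by rw [hv.exactlyOne_three, hv.bot, hprov φ hφ]; rfl

theorem RespectsPropLogic.partitionOfTruth_conj_neg_neg (hPL : L.RespectsPropLogic)
    {φ ψ : S} (hdisjoint : L.Provable (L.neg (L.conj φ ψ))) :
    L.PartitionOfTruth φ ψ (L.conj (L.neg φ) (L.neg ψ)) :=
  hPL _ fun v hv hprov => by
    have hφψ := hprov _ hdisjoint
    rw [hv.neg, hv.conj] at hφψ
    rw [hv.exactlyOne_three, hv.conj, hv.neg, hv.neg]
    revert hφψ
    cases v φ <;> cases v ψ <;> decide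

theorem RespectsPropLogic.partitionOfTruth_disj (hPL : L.RespectsPropLogic)
    (φ ψ : S) :
    L.PartitionOfTruth (L.disj φ ψ) (L.conj (L.neg φ) (L.neg ψ)) L.bot :=
  hPL _ fun v hv _ => by
    rw [hv.exactlyOne_three, hv.disj, hv.conj, hv.neg, hv.neg, hv.bot]
    cases v φ <;> cases v ψ <;> rfl

end LogicCtx

noncomputable def pointwiseLimit {S : Type} (M : ℕ → S → ℝ) (φ : S) : ℝ :=
  limUnder atTop fun n => M n φ

namespace LogicCtx.InductivelyCoherent

variable {S : Type} {L : LogicCtx S} {QC : (ℕ → S) → Prop} {M : ℕ → S → ℝ}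

theorem tendsto_pointwiseLimit (hM : L.InductivelyCoherent QC M) (hPL : L.RespectsPropLogic)
    (hconst : ∀ φ, QC fun _ => φ) (φ : S) :
    Tendsto (fun n => M n φ) atTop (𝓝 (pointwiseLimit M φ)) :=
  tendsto_nhds_limUnder (hM.2.2.1 _ (hconst φ) fun _ => hPL.provable_imp_self φ)

theorem pointwiseLimit_mem_Icc (hM : L.InductivelyCoherent QC M) (hPL : L.RespectsPropLogic)
    (hconst : ∀ φ, QC fun _ => φ) (φ : S) :
    pointwiseLimit M φ ∈ Set.Icc (0 : ℝ) 1 :=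
  isClosed_Icc.mem_of_tendsto (hM.tendsto_pointwiseLimit hPL hconst φ)
    (Eventually.of_forall fun n => hM.1 n φ)

theorem pointwiseLimit_bot (hM : L.InductivelyCoherent QC M) : pointwiseLimit M L.bot = 0 :=
  hM.2.1.limUnder_eq

theorem pointwiseLimit_add_add_eq_one (hM : L.InductivelyCoherent QC M)
    (hPL : L.RespectsPropLogic) (hconst : ∀ φ, QC fun _ => φ) {φ ψ χ : S}
    (hpart : L.PartitionOfTruth φ ψ χ) :
    pointwiseLimit M φ + pointwiseLimit M ψ + pointwiseLimit M χ = 1 :=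
  tendsto_nhds_unique
    (((hM.tendsto_pointwiseLimit hPL hconst φ).add (hM.tendsto_pointwiseLimit hPL hconst ψ)).add
      (hM.tendsto_pointwiseLimit hPL hconst χ))
    (hM.2.2.2 _ _ _ (hconst φ) (hconst ψ) (hconst χ) fun _ => hpart)

theorem pointwiseLimit_eq_one_of_provable (hM : L.InductivelyCoherent QC M)
    (hPL : L.RespectsPropLogic) (hconst : ∀ φ, QC fun _ => φ) {φ : S} (hφ : L.Provable φ) :
    pointwiseLimit M φ = 1 := by
  simpa only [hM.pointwiseLimit_bot, add_zero] using
    hM.pointwiseLimit_add_add_eq_one hPL hconst (hPL.partitionOfTruth_bot_bot hφ)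

theorem pointwiseLimit_disj (hM : L.InductivelyCoherent QC M)
    (hPL : L.RespectsPropLogic) (hconst : ∀ φ, QC fun _ => φ) {φ ψ : S}
    (hdisjoint : L.Provable (L.neg (L.conj φ ψ))) :
    pointwiseLimit M (L.disj φ ψ) = pointwiseLimit M φ + pointwiseLimit M ψ := by
  have hsplit := hM.pointwiseLimit_add_add_eq_one hPL hconst
    (hPL.partitionOfTruth_conj_neg_neg hdisjoint)
  have hjoin := hM.pointwiseLimit_add_add_eq_one hPL hconst (hPL.partitionOfTruth_disj φ ψ)
  rw [hM.pointwiseLimit_bot] at hjoin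
  linarith

end LogicCtx.InductivelyCoherent

/-- If `M` is inductively coherent, then the pointwise limit
`P(φ) := limₙ Mₙ(φ)` exists for every sentence, takes values in `[0,1]`, and
is coherent: `P(φ) = 1` for provable `φ`, and `P(φ ∨ ψ) = P(φ) + P(ψ)`
whenever `¬(φ ∧ ψ)` is provable. -/
theorem inductively_coherent_limit_coherent
    (S : Type) (L : LogicCtx S) (QC : (ℕ → S) → Prop)
    (hPL : L.RespectsPropLogic) (hQC : L.QCClosed QC)
    (M : ℕ → S → ℝ) (hM : L.InductivelyCoherent QC M) :
    ∃ P : S → ℝ,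
      (∀ φ, Filter.Tendsto (fun n => M n φ) Filter.atTop (nhds (P φ))) ∧
      (∀ φ, P φ ∈ Set.Icc (0 : ℝ) 1) ∧
      (∀ φ, L.Provable φ → P φ = 1) ∧
      (∀ φ ψ, L.Provable (L.neg (L.conj φ ψ)) → P (L.disj φ ψ) = P φ + P ψ) :=
  ⟨pointwiseLimit M, hM.tendsto_pointwiseLimit hPL hQC.1, hM.pointwiseLimit_mem_Icc hPL hQC.1,
    fun _ => hM.pointwiseLimit_eq_one_of_provable hPL hQC.1,
    fun _ _ => hM.pointwiseLimit_disj hPL hQC.1⟩
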